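/- Let δ ∈ (0,2), σ > 0 and M > 0. There exists a constant C = C(M, σ, δ) > 0 such that for every β > 0 and every measurable L : ℝ → ℝ satisfying |L(θ)| ≤ β·exp(|θ|^{2−δ}) for all θ ∈ ℝ, the derivative of the Gaussian smoothed loss satisfies |L_σ′(θ)| ≤ β·C for all θ with |θ| ≤ M. -/

import Mathlib

open MeasureTheory ProbabilityTheory Real
open scoped NNReal ENNReal

/-- The Gaussian smoothing `L_σ(θ) = E_{ε ~ N(0,σ²)}[L (θ + ε)]` of a loss `L`. -/
noncomputable def gaussianSmoothing (L : ℝ → ℝ) (σ θ : ℝ) : ℝ :=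
  ∫ ε, L (θ + ε) ∂(gaussianReal 0 ⟨σ ^ 2, sq_nonneg σ⟩)

lemma aux_rpow (p a b : ℝ) (hp0 : 0 < p) (hp2 : p < 2) (ha : 0 < a) (hb : 0 ≤ b) :
    ∃ K : ℝ, 0 ≤ K ∧ ∀ x : ℝ, b * |x| ^ p ≤ a * x ^ 2 + K := by
  set T : ℝ := max 1 ((b / a) ^ (1 / (2 - p))) with hT
  have hT1 : (1:ℝ) ≤ T := le_max_left _ _
  have hT0 : (0:ℝ) < T := lt_of_lt_of_le one_pos hT1
  refine ⟨b * T ^ p, mul_nonneg hb (rpow_nonneg hT0.le _), fun x => ?_⟩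
  rcases le_or_gt |x| T with hx | hx
  · have h1 : |x| ^ p ≤ T ^ p := rpow_le_rpow (abs_nonneg x) hx hp0.le
    nlinarith [mul_nonneg (sq_nonneg x) ha.le, mul_le_mul_of_nonneg_left h1 hb]
  · have hx0 : (0:ℝ) < |x| := lt_trans hT0 hx
    have h2 : (b/a) ^ (1/(2-p)) ≤ |x| := le_trans (le_max_right _ _) hx.le
    have h1 : b / a ≤ |x| ^ (2 - p) := by
      calc b / a = ((b/a) ^ (1/(2-p))) ^ (2-p) := by
            rw [← rpow_mul (div_nonneg hb ha.le), one_div,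
              inv_mul_cancel₀ (by linarith : (2:ℝ) - p ≠ 0), rpow_one]
        _ ≤ |x| ^ (2-p) := rpow_le_rpow (rpow_nonneg (div_nonneg hb ha.le) _) h2 (by linarith)
    have h3 : b ≤ a * |x| ^ (2 - p) := by
      rw [div_le_iff₀ ha] at h1; linarith [h1]
    have h4 : b * |x| ^ p ≤ a * (|x| ^ (2 - p) * |x| ^ p) := by
      rw [← mul_assoc]
      exact mul_le_mul_of_nonneg_right h3 (rpow_nonneg (abs_nonneg x) p)
    have h5 : |x| ^ (2 - p) * |x| ^ p = x ^ 2 := by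
      rw [← rpow_add hx0]
      norm_num
    calc b * |x| ^ p ≤ a * x ^ 2 := by rw [← h5]; exact h4
      _ ≤ a * x ^ 2 + b * T ^ p := by
          nlinarith [mul_nonneg hb (rpow_nonneg hT0.le p)]

lemma key_hasDerivAt (σ : ℝ) (hσ : 0 < σ) (x t : ℝ) :
    HasDerivAt (fun t => gaussianPDFReal 0 ⟨σ ^ 2, sq_nonneg σ⟩ (x - t))
      ((x - t) / σ ^ 2 * gaussianPDFReal 0 ⟨σ ^ 2, sq_nonneg σ⟩ (x - t)) t := by
  have hσ2 : (0:ℝ) < σ ^ 2 := by positivity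
  simp only [gaussianPDFReal, sub_zero, NNReal.coe_mk]
  change HasDerivAt (fun t => (√(2 * π * σ ^ 2))⁻¹ * rexp (-(x - t) ^ 2 / (2 * σ ^ 2)))
    ((x - t) / σ ^ 2 * ((√(2 * π * σ ^ 2))⁻¹ * rexp (-(x - t) ^ 2 / (2 * σ ^ 2)))) t
  have h1 : HasDerivAt (fun t : ℝ => x - t) (-1) t := by
    simpa using (hasDerivAt_id t).const_sub x
  have h2 : HasDerivAt (fun t : ℝ => -(x - t) ^ 2 / (2 * σ ^ 2)) ((x - t) / σ ^ 2) t := by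
    have := ((h1.pow 2).neg).div_const (2 * σ ^ 2)
    refine this.congr_deriv ?_
    field_simp
    ring
  have h3 := (Real.hasDerivAt_exp (-(x - t) ^ 2 / (2 * σ ^ 2))).comp t h2
  have h4 := h3.const_mul (Real.sqrt (2 * π * σ ^ 2))⁻¹
  refine h4.congr_deriv ?_
  ring

lemma smoothing_eq (L : ℝ → ℝ) (hL : Measurable L) (σ : ℝ) (hσ : 0 < σ) (t : ℝ) :
    gaussianSmoothing L σ t
      = ∫ x, L x * gaussianPDFReal 0 ⟨σ ^ 2, sq_nonneg σ⟩ (x - t) := by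
  set v : ℝ≥0 := ⟨σ ^ 2, sq_nonneg σ⟩ with hv
  have hv0 : v ≠ 0 := by
    intro h
    have : (v : ℝ) = 0 := by rw [h]; simp
    rw [hv] at this
    change σ ^ 2 = 0 at this
    nlinarith
  rw [gaussianSmoothing, gaussianReal_of_var_ne_zero _ hv0]
  have hpdf : gaussianPDF 0 v
      = fun x => ((Real.toNNReal (gaussianPDFReal 0 v x) : ℝ≥0) : ℝ≥0∞) := rfl
  rw [hpdf, integral_withDensity_eq_integral_smul
    ((measurable_gaussianPDFReal 0 v).real_toNNReal) (fun ε => L (t + ε))]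
  have h1 : ∀ ε : ℝ, (Real.toNNReal (gaussianPDFReal 0 v ε)) • L (t + ε)
      = L (t + ε) * gaussianPDFReal 0 v ε := by
    intro ε
    rw [NNReal.smul_def, Real.coe_toNNReal _ (gaussianPDFReal_nonneg 0 v ε), smul_eq_mul,
      mul_comm]
  simp only [h1]
  have := MeasureTheory.integral_add_left_eq_self
    (μ := (volume : Measure ℝ)) (fun y => L y * gaussianPDFReal 0 v (y - t)) t
  rw [← this]
  congr 1
  ext ε
  simp

/-- For fixed `δ ∈ (0,2)`, `σ > 0` and `M > 0`, there exists a constant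
`C = C(M, σ, δ) > 0` such that for every `β > 0` and every measurable `L` satisfying the
growth bound `|L θ| ≤ β · exp(|θ|^(2−δ))`, the derivative of the Gaussian smoothed loss
satisfies `|L_σ′(θ)| ≤ β · C` for all `θ` with `|θ| ≤ M`. -/
theorem gaussian_smoothing_deriv_bound
    (δ σ M : ℝ) (hδ : δ ∈ Set.Ioo (0 : ℝ) 2) (hσ : 0 < σ) (hM : 0 < M) :
    ∃ C : ℝ, 0 < C ∧
      ∀ β : ℝ, 0 < β → ∀ L : ℝ → ℝ, Measurable L →
        (∀ θ : ℝ, |L θ| ≤ β * Real.exp (|θ| ^ (2 - δ))) →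
        ∀ θ : ℝ, |θ| ≤ M →
          |deriv (fun t : ℝ => gaussianSmoothing L σ t) θ| ≤ β * C := by
  obtain ⟨hδ0, hδ2⟩ := hδ
  have hσ2 : (0:ℝ) < σ ^ 2 := by positivity
  set v : ℝ≥0 := ⟨σ ^ 2, sq_nonneg σ⟩ with hv
  set c : ℝ := M + 1 with hc
  have hc0 : (0:ℝ) < c := by rw [hc]; linarith
  set a : ℝ := (Real.sqrt (2 * π * σ ^ 2))⁻¹ with ha
  have ha0 : (0:ℝ) < a := by
    rw [ha]
    have : (0:ℝ) < 2 * π * σ ^ 2 := by positivity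
    positivity
  set b : ℝ := (4 * σ ^ 2)⁻¹ with hb
  have hb0 : (0:ℝ) < b := by rw [hb]; positivity
  have invs : (σ ^ 2)⁻¹ = 4 * b := by rw [hb]; field_simp
  have inv8 : ((8 * σ ^ 2)⁻¹ : ℝ) = b / 2 := by rw [hb]; field_simp; ring
  obtain ⟨K₁, hK₁0, hK₁⟩ := aux_rpow (2 - δ) ((8 * σ ^ 2)⁻¹) 1 (by linarith) (by linarith)
    (by positivity) one_pos.le
  obtain ⟨K₂, hK₂0, hK₂⟩ := aux_rpow 1 ((8 * σ ^ 2)⁻¹) (c / σ ^ 2) one_pos (by norm_num)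
    (by positivity) (by positivity)
  set K : ℝ := K₁ + K₂ with hK
  have hEK : ∀ x : ℝ, |x| ^ (2 - δ) + c * |x| * (4 * b) - x ^ 2 * (2 * b) ≤ K - b * x ^ 2 := by
    intro x
    have h1 := hK₁ x
    have h2 := hK₂ x
    rw [rpow_one, inv8] at h2
    rw [inv8] at h1
    have h3 : c / σ ^ 2 = c * (4 * b) := by rw [div_eq_mul_inv, invs]
    rw [h3] at h2
    rw [hK]
    clear_value v c a b K
    linarith [h1, h2]
  -- the function whose integral gives the constant
  set h : ℝ → ℝ := fun x => (|x| + c) * (4 * b)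
      * (a * Real.exp (|x| ^ (2 - δ) + c * |x| * (4 * b) - x ^ 2 * (2 * b))) with hh
  have hnn : ∀ x, 0 ≤ h x := by
    intro x
    rw [hh]
    have h1 : (0:ℝ) ≤ |x| + c := by linarith [abs_nonneg x]
    exact mul_nonneg (mul_nonneg h1 (by linarith)) (mul_nonneg ha0.le (Real.exp_pos _).le)
  have int_exp : Integrable fun x : ℝ => Real.exp (-(b * x ^ 2)) := by
    simpa [neg_mul] using integrable_exp_neg_mul_sq hb0
  have int_abs : Integrable fun x : ℝ => |x| * Real.exp (-(b * x ^ 2)) := by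
    refine (integrable_mul_exp_neg_mul_sq hb0).abs.congr (Filter.Eventually.of_forall fun x => ?_)
    simp only [abs_mul, abs_of_pos (Real.exp_pos _), neg_mul]
  have hcont : Continuous h := by
    have c1 : Continuous fun x : ℝ => |x| ^ (2 - δ) :=
      continuous_abs.rpow_const (fun x => Or.inr (by linarith))
    have c2 : Continuous fun x : ℝ => |x| ^ (2 - δ) + c * |x| * (4 * b) - x ^ 2 * (2 * b) := by
      exact (c1.add ((continuous_const.mul continuous_abs).mul continuous_const)).sub
        ((continuous_pow 2).mul continuous_const)
    exact ((continuous_abs.add continuous_const).mul continuous_const).mul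
      (continuous_const.mul (Real.continuous_exp.comp c2))
  have hle : ∀ x : ℝ, ‖h x‖ ≤ (4 * b) * (a * Real.exp K) * (|x| * Real.exp (-(b * x ^ 2)))
      + c * (4 * b) * (a * Real.exp K) * Real.exp (-(b * x ^ 2)) := by
    intro x
    have h1 : (0:ℝ) ≤ |x| + c := by linarith [abs_nonneg x]
    rw [Real.norm_eq_abs, abs_of_nonneg (hnn x), hh]
    calc (|x| + c) * (4 * b)
        * (a * Real.exp (|x| ^ (2 - δ) + c * |x| * (4 * b) - x ^ 2 * (2 * b)))
        ≤ (|x| + c) * (4 * b) * (a * (Real.exp K * Real.exp (-(b * x ^ 2)))) := by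
          refine mul_le_mul_of_nonneg_left (mul_le_mul_of_nonneg_left ?_ ha0.le)
            (mul_nonneg h1 (by linarith))
          rw [← Real.exp_add]
          exact Real.exp_le_exp.mpr (by linarith [hEK x])
      _ = (4 * b) * (a * Real.exp K) * (|x| * Real.exp (-(b * x ^ 2)))
          + c * (4 * b) * (a * Real.exp K) * Real.exp (-(b * x ^ 2)) := by ring
  have Int_h : Integrable h :=
    ((int_abs.const_mul _).add (int_exp.const_mul _)).mono'
      hcont.aestronglyMeasurable (Filter.Eventually.of_forall hle)
  have hInt_nonneg : (0:ℝ) ≤ ∫ x, h x := integral_nonneg hnn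
  refine ⟨(∫ x, h x) + 1, by linarith, ?_⟩
  intro β hβ L hLmeas hLbd θ₀ hθ₀
  -- facts about the pdf
  have pdf_eq : ∀ y : ℝ, gaussianPDFReal 0 v y = a * Real.exp (-y ^ 2 * (2 * b)) := by
    intro y
    simp only [gaussianPDFReal, sub_zero, NNReal.coe_mk, hv, ha]
    change (√(2 * π * σ ^ 2))⁻¹ * rexp (-y ^ 2 / (2 * σ ^ 2)) = _
    congr 1
    rw [div_eq_mul_inv]
    congr 1
    rw [hb]
    field_simp
    ring
  have pdf_le : ∀ x t : ℝ, |t| ≤ c →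
      gaussianPDFReal 0 v (x - t) ≤ a * Real.exp (c * |x| * (4 * b) - x ^ 2 * (2 * b)) := by
    intro x t ht
    rw [pdf_eq]
    refine mul_le_mul_of_nonneg_left (Real.exp_le_exp.mpr ?_) ha0.le
    have hxt : x * t ≤ |x| * c :=
      le_trans (le_abs_self _) (by rw [abs_mul]; exact mul_le_mul_of_nonneg_left ht (abs_nonneg x))
    have h9 : (0:ℝ) ≤ t ^ 2 + 2 * (|x| * c - x * t) := by nlinarith
    nlinarith [mul_nonneg hb0.le h9]
  -- pointwise bound on the derivative integrand
  have hb_pt : ∀ x t : ℝ, |t| ≤ c →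
      ‖L x * ((x - t) / σ ^ 2 * gaussianPDFReal 0 v (x - t))‖ ≤ β * h x := by
    intro x t ht
    rw [Real.norm_eq_abs, abs_mul, abs_mul, abs_div,
      abs_of_nonneg (gaussianPDFReal_nonneg 0 v (x - t)), abs_of_pos hσ2]
    have hxc : |x - t| ≤ |x| + c := le_trans (abs_sub _ _) (by linarith [abs_nonneg x])
    calc |L x| * (|x - t| / σ ^ 2 * gaussianPDFReal 0 v (x - t))
        ≤ (β * Real.exp (|x| ^ (2 - δ)))
          * ((|x| + c) / σ ^ 2 * (a * Real.exp (c * |x| * (4 * b) - x ^ 2 * (2 * b)))) := by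
          refine mul_le_mul (hLbd x) ?_ ?_ (mul_nonneg hβ.le (Real.exp_pos _).le)
          · exact mul_le_mul (by gcongr) (pdf_le x t ht) (gaussianPDFReal_nonneg 0 v _)
              (by positivity)
          · exact mul_nonneg (by positivity) (gaussianPDFReal_nonneg 0 v _)
      _ = β * h x := by
          simp only [hh]
          have e1 : |x| ^ (2 - δ) + c * |x| * (4 * b) - x ^ 2 * (2 * b)
              = |x| ^ (2 - δ) + (c * |x| * (4 * b) - x ^ 2 * (2 * b)) := by ring
          rw [e1, Real.exp_add, div_eq_mul_inv, invs]
          ring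
  -- differentiate under the integral sign
  have hder := hasDerivAt_integral_of_dominated_loc_of_deriv_le
    (μ := (volume : Measure ℝ)) (x₀ := θ₀)
    (F := fun t x => L x * gaussianPDFReal 0 v (x - t))
    (F' := fun t x => L x * ((x - t) / σ ^ 2 * gaussianPDFReal 0 v (x - t)))
    (bound := fun x => β * h x) (Metric.ball_mem_nhds θ₀ one_pos)
    (Filter.Eventually.of_forall fun t =>
      (hLmeas.mul ((measurable_gaussianPDFReal 0 v).comp (measurable_id.sub_const t))).aestronglyMeasurable)
    ?_ ?_ ?_ ?_ ?_
  · obtain ⟨hFi', hder⟩ := hder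
    have heq : (fun t : ℝ => gaussianSmoothing L σ t)
        = fun t => ∫ x, L x * gaussianPDFReal 0 v (x - t) :=
      funext fun t => smoothing_eq L hLmeas σ hσ t
    rw [heq, hder.deriv]
    calc |∫ x, L x * ((x - θ₀) / σ ^ 2 * gaussianPDFReal 0 v (x - θ₀))|
        ≤ ∫ x, ‖L x * ((x - θ₀) / σ ^ 2 * gaussianPDFReal 0 v (x - θ₀))‖ := by
          have := norm_integral_le_integral_norm (μ := (volume : Measure ℝ))
            (f := fun x => L x * ((x - θ₀) / σ ^ 2 * gaussianPDFReal 0 v (x - θ₀)))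
          simpa only [Real.norm_eq_abs] using this
      _ ≤ ∫ x, β * h x := by
          refine integral_mono_of_nonneg (Filter.Eventually.of_forall fun x => norm_nonneg _)
            (Int_h.const_mul β) (Filter.Eventually.of_forall fun x => ?_)
          exact hb_pt x θ₀ (by rw [hc]; linarith)
      _ = β * ∫ x, h x := MeasureTheory.integral_const_mul β h
      _ ≤ β * ((∫ x, h x) + 1) := by nlinarith
  · -- integrability of F θ₀
    refine ((int_exp.const_mul (β * (a * Real.exp K))).mono'
      ((hLmeas.mul ((measurable_gaussianPDFReal 0 v).comp
        (measurable_id.sub_const θ₀))).aestronglyMeasurable)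
      (Filter.Eventually.of_forall fun x => ?_))
    rw [Real.norm_eq_abs, abs_mul, abs_of_nonneg (gaussianPDFReal_nonneg 0 v (x - θ₀))]
    calc |L x| * gaussianPDFReal 0 v (x - θ₀)
        ≤ (β * Real.exp (|x| ^ (2 - δ)))
          * (a * Real.exp (c * |x| * (4 * b) - x ^ 2 * (2 * b))) :=
          mul_le_mul (hLbd x) (pdf_le x θ₀ (by rw [hc]; linarith))
            (gaussianPDFReal_nonneg 0 v _) (mul_nonneg hβ.le (Real.exp_pos _).le)
      _ = (β * a) * Real.exp (|x| ^ (2 - δ) + (c * |x| * (4 * b) - x ^ 2 * (2 * b))) := by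
          rw [Real.exp_add]; ring
      _ ≤ (β * a) * (Real.exp K * Real.exp (-(b * x ^ 2))) := by
          refine mul_le_mul_of_nonneg_left ?_ (mul_nonneg hβ.le ha0.le)
          rw [← Real.exp_add]
          exact Real.exp_le_exp.mpr (by linarith [hEK x])
      _ = β * (a * Real.exp K) * Real.exp (-(b * x ^ 2)) := by ring
  · exact (hLmeas.mul (((measurable_id.sub_const θ₀).div_const _).mul
      ((measurable_gaussianPDFReal 0 v).comp (measurable_id.sub_const θ₀)))).aestronglyMeasurable
  · refine Filter.Eventually.of_forall fun x => fun t htb => ?_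
    have ht : |t| ≤ c := by
      rw [Metric.mem_ball, Real.dist_eq] at htb
      rw [hc]
      have := abs_sub_abs_le_abs_sub t θ₀
      linarith [le_of_lt htb, hθ₀]
    exact hb_pt x t ht
  · exact Int_h.const_mul β
  · refine Filter.Eventually.of_forall fun x => fun t _ => ?_
    exact (key_hasDerivAt σ hσ x t).const_mul (L x)
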